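/- arXiv:2504.12987 — 3 statements merged into one kernel-verified Lean document; each statement's English description precedes it below -/
import Mathlib

section
/- Let f ∈ C^{1,α}([0,1]) with α ∈ (0,1], ‖f‖_{L∞([0,1])} ≤ A and ‖f'‖_{C^{0,α}([0,1])} ≤ B, where 0 < A ≤ B. Then the C^{α/2}-Hölder seminorm of f' satisfies [f']_{C^{α/2}([0,1])} ≤ (12 B^{1/(1+α)} + B) A^{α/(2(1+α))}. -/
/-!
Interpolation: the mean value theorem on an interval of length `h` around `z` gives
`|f' z| ≤ 2A/h + S h^α`, and `h = (A/B)^{1/(1+α)}` turns this into `sup |f'| ≤ 3 b a^α`, where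
`a = A^{1/(1+α)}` and `b = B^{1/(1+α)}`. The oscillation of `f'` over a distance `t` is thus at
most `6 b a^α` and at most `B t^α`, and `min (a^α) (t^α) ≤ a^{α/2} t^{α/2}`.
-/

open Set

theorem exists_mem_Ioo_abs_le_two_mul_div {f f' : ℝ → ℝ} {a b A : ℝ} (hab : a < b)
    (hderiv : ∀ x ∈ Icc a b, HasDerivWithinAt f (f' x) (Icc a b) x)
    (hf : ∀ x ∈ Icc a b, |f x| ≤ A) :
    ∃ ξ ∈ Ioo a b, |f' ξ| ≤ 2 * A / (b - a) := by
  have hcont : ContinuousOn f (Icc a b) := fun x hx => (hderiv x hx).continuousWithinAt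
  have hderiv' : ∀ x ∈ Ioo a b, HasDerivAt f (f' x) x := fun x hx =>
    (hderiv x (Ioo_subset_Icc_self hx)).hasDerivAt (Icc_mem_nhds hx.1 hx.2)
  obtain ⟨ξ, hξ, hslope⟩ := exists_hasDerivAt_eq_slope f f' hab hcont hderiv'
  refine ⟨ξ, hξ, ?_⟩
  have hfb := hf b (right_mem_Icc.2 hab.le)
  have hfa := hf a (left_mem_Icc.2 hab.le)
  rw [hslope, abs_div, abs_of_pos (sub_pos.2 hab)]
  gcongr
  calc |f b - f a| ≤ |f b| + |f a| := abs_sub _ _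
    _ ≤ 2 * A := by linarith

theorem abs_le_two_mul_div_add_mul_rpow {f f' : ℝ → ℝ} {a b A S α h : ℝ}
    (hderiv : ∀ x ∈ Icc a b, HasDerivWithinAt f (f' x) (Icc a b) x)
    (hf : ∀ x ∈ Icc a b, |f x| ≤ A)
    (hS : ∀ x ∈ Icc a b, ∀ y ∈ Icc a b, |f' x - f' y| ≤ S * |x - y| ^ α)
    (hS0 : 0 ≤ S) (hα : 0 ≤ α) (hh : 0 < h) (hhb : h ≤ b - a) {z : ℝ} (hz : z ∈ Icc a b) :
    |f' z| ≤ 2 * A / h + S * h ^ α := by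
  set c := min z (b - h)
  have hsub : Icc c (c + h) ⊆ Icc a b :=
    Icc_subset_Icc (le_min hz.1 (by linarith)) (by linarith [min_le_right z (b - h)])
  have hzc : z ∈ Icc c (c + h) := by
    have hzh : z - h ≤ c := le_min (by linarith) (by linarith [hz.2])
    exact ⟨min_le_left _ _, by linarith⟩
  obtain ⟨ξ, hξ, hξA⟩ := exists_mem_Ioo_abs_le_two_mul_div (by linarith : c < c + h)
    (fun x hx => (hderiv x (hsub hx)).mono hsub) (fun x hx => hf x (hsub hx))
  rw [add_sub_cancel_left] at hξA
  have hzξ : |z - ξ| ≤ h := abs_sub_le_iff.2 ⟨by linarith [hzc.2, hξ.1], by linarith [hzc.1, hξ.2]⟩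
  calc |f' z| ≤ |f' z - f' ξ| + |f' ξ| := norm_le_norm_sub_add (f' z) (f' ξ)
    _ ≤ S * |z - ξ| ^ α + 2 * A / h := add_le_add (hS z hz ξ (hsub (Ioo_subset_Icc_self hξ))) hξA
    _ ≤ 2 * A / h + S * h ^ α := by
      rw [add_comm]
      gcongr

theorem Real.rpow_one_div_one_add_mul_rpow {x α : ℝ} (hx : 0 ≤ x) (hα : 1 + α ≠ 0) :
    x ^ (1 / (1 + α)) * (x ^ (1 / (1 + α))) ^ α = x := by
  rw [← Real.rpow_one_add' (by positivity) hα, one_div, Real.rpow_inv_rpow hx hα]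

theorem two_mul_div_add_mul_div_rpow {a b α : ℝ} (ha : 0 < a) (hb : 0 < b) :
    2 * (a * a ^ α) / (a / b) + b * b ^ α * (a / b) ^ α = 3 * b * a ^ α := by
  rw [Real.div_rpow ha.le hb.le]
  field_simp
  ring

theorem le_add_mul_rpow_half_mul_rpow_half {u δ t D B α : ℝ} (hδ : 0 ≤ δ) (ht : 0 ≤ t)
    (hα : 0 ≤ α) (hD : 0 ≤ D) (hB : 0 ≤ B) (hδu : u ≤ D * δ ^ α) (htu : u ≤ B * t ^ α) :
    u ≤ (D + B) * δ ^ (α / 2) * t ^ (α / 2) := by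
  have hsplit : ∀ x : ℝ, 0 ≤ x → x ^ α = x ^ (α / 2) * x ^ (α / 2) := fun x hx => by
    rw [← Real.rpow_add_of_nonneg hx (by positivity) (by positivity), add_halves]
  have hδt : 0 ≤ δ ^ (α / 2) * t ^ (α / 2) := by positivity
  rcases le_total δ t with h | h
  · calc u ≤ D * (δ ^ (α / 2) * δ ^ (α / 2)) := by rwa [← hsplit δ hδ]
      _ ≤ D * (δ ^ (α / 2) * t ^ (α / 2)) := by gcongr
      _ ≤ (D + B) * δ ^ (α / 2) * t ^ (α / 2) := by nlinarith
  · calc u ≤ B * (t ^ (α / 2) * t ^ (α / 2)) := by rwa [← hsplit t ht]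
      _ ≤ B * (δ ^ (α / 2) * t ^ (α / 2)) := by gcongr
      _ ≤ (D + B) * δ ^ (α / 2) * t ^ (α / 2) := by nlinarith

theorem stmt1_general (f f' : ℝ → ℝ) (α A B M S : ℝ)
    (hα0 : 0 < α) (hA : 0 < A) (hAB : A ≤ B)
    (hderiv : ∀ x ∈ Icc (0:ℝ) 1, HasDerivWithinAt f (f' x) (Icc (0:ℝ) 1) x)
    (hf : ∀ x ∈ Icc (0:ℝ) 1, |f x| ≤ A)
    (hM0 : 0 ≤ M) (hS0 : 0 ≤ S)
    (hS : ∀ x ∈ Icc (0:ℝ) 1, ∀ y ∈ Icc (0:ℝ) 1, |f' x - f' y| ≤ S * |x - y| ^ α)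
    (hMS : M + S ≤ B) :
    ∀ x ∈ Icc (0:ℝ) 1, ∀ y ∈ Icc (0:ℝ) 1,
      |f' x - f' y| ≤
        (12 * B ^ (1 / (1 + α)) + B) * A ^ (α / (2 * (1 + α))) * |x - y| ^ (α / 2) := by
  have hB : 0 < B := hA.trans_le hAB
  have hSB : S ≤ B := by linarith
  set a := A ^ (1 / (1 + α)) with ha_def
  set b := B ^ (1 / (1 + α))
  have ha : 0 < a := by positivity
  have hb : 0 < b := by positivity
  have hab : a / b ≤ 1 := div_le_one_of_le₀ (Real.rpow_le_rpow hA.le hAB (by positivity)) hb.le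
  have hsup : ∀ z ∈ Icc (0:ℝ) 1, |f' z| ≤ 3 * b * a ^ α := fun z hz => calc
    |f' z| ≤ 2 * A / (a / b) + S * (a / b) ^ α :=
      abs_le_two_mul_div_add_mul_rpow hderiv hf hS hS0 hα0.le (by positivity) (by simpa) hz
    _ ≤ 2 * A / (a / b) + B * (a / b) ^ α := by gcongr
    _ = 3 * b * a ^ α := by
      rw [← Real.rpow_one_div_one_add_mul_rpow hA.le (by positivity : 1 + α ≠ 0),
        ← Real.rpow_one_div_one_add_mul_rpow hB.le (by positivity : 1 + α ≠ 0)]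
      exact two_mul_div_add_mul_div_rpow ha hb
  intro x hx y hy
  have hosc : |f' x - f' y| ≤ 6 * b * a ^ α := by
    linarith [abs_sub (f' x) (f' y), hsup x hx, hsup y hy]
  have hexp : A ^ (α / (2 * (1 + α))) = a ^ (α / 2) := by
    rw [ha_def, ← Real.rpow_mul hA.le]
    congr 1
    field_simp
  calc |f' x - f' y| ≤ (6 * b + B) * a ^ (α / 2) * |x - y| ^ (α / 2) :=
        le_add_mul_rpow_half_mul_rpow_half ha.le (abs_nonneg _) hα0.le (by positivity) hB.le
          hosc ((hS x hx y hy).trans (by gcongr))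
    _ ≤ (12 * b + B) * A ^ (α / (2 * (1 + α))) * |x - y| ^ (α / 2) := by
        rw [hexp]
        gcongr
        linarith

/-- If `‖f‖_{L∞([0,1])} ≤ A` and `‖f'‖_{C^{0,α}([0,1])} ≤ B` (decomposed as sup-norm bound `M`
plus Hölder seminorm bound `S` with `M + S ≤ B`), with `0 < A ≤ B`, then the `C^{α/2}` Hölder
seminorm of `f'` is at most `(12 B^{1/(1+α)} + B) A^{α/(2(1+α))}`. -/
theorem stmt1 (f f' : ℝ → ℝ) (α A B M S : ℝ)
    (hα0 : 0 < α) (hα1 : α ≤ 1) (hA : 0 < A) (hAB : A ≤ B)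
    (hderiv : ∀ x ∈ Icc (0:ℝ) 1, HasDerivWithinAt f (f' x) (Icc (0:ℝ) 1) x)
    (hf : ∀ x ∈ Icc (0:ℝ) 1, |f x| ≤ A)
    (hM0 : 0 ≤ M) (hS0 : 0 ≤ S)
    (hM : ∀ x ∈ Icc (0:ℝ) 1, |f' x| ≤ M)
    (hS : ∀ x ∈ Icc (0:ℝ) 1, ∀ y ∈ Icc (0:ℝ) 1, |f' x - f' y| ≤ S * |x - y| ^ α)
    (hMS : M + S ≤ B) :
    ∀ x ∈ Icc (0:ℝ) 1, ∀ y ∈ Icc (0:ℝ) 1,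
      |f' x - f' y| ≤
        (12 * B ^ (1 / (1 + α)) + B) * A ^ (α / (2 * (1 + α))) * |x - y| ^ (α / 2) :=
  stmt1_general f f' α A B M S hα0 hA hAB hderiv hf hM0 hS0 hS hMS
end

section
/- Let u: V̄ → ℝ be convex on V = (0,∞)² × ℝ^{n-2} with u(x) = (1/2)|x|² on ∂V. Then for all x ∈ V, u(x) ≤ (1/2)|x|² + x₁x₂. -/
/-!
Write `a = x₁`, `b = x₂`. Moving all of `a + b` onto either coordinate gives two boundary
points `P = (a + b, 0, x')` and `Q = (0, a + b, x')`, and `x` is their convex combination with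
weights `a / (a + b)` and `b / (a + b)`. Both have squared norm `|x|² + 2ab`, so convexity
gives `u x ≤ ½ (|x|² + 2ab)`.
-/

open Function

section

variable {ι : Type*} [DecidableEq ι]

def mergeInto (x : ι → ℝ) (i j : ι) : ι → ℝ :=
  update (update x j 0) i (x i + x j)

lemma mergeInto_apply_self (x : ι → ℝ) (i j : ι) : mergeInto x i j i = x i + x j := by
  simp [mergeInto]

lemma mergeInto_apply_right {i j : ι} (x : ι → ℝ) (hij : i ≠ j) : mergeInto x i j j = 0 := by
  simp [mergeInto, hij.symm]

lemma sum_sq_update [Fintype ι] (x : ι → ℝ) (i : ι) (c : ℝ) :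
    ∑ k, update x i c k ^ 2 = ∑ k, x k ^ 2 - x i ^ 2 + c ^ 2 := by
  have hsq : (fun k ↦ update x i c k ^ 2) = update (fun k ↦ x k ^ 2) i (c ^ 2) := by
    ext k; rcases eq_or_ne k i with rfl | hk <;> simp [*]
  rw [hsq, Finset.sum_update_of_mem (Finset.mem_univ i), Finset.sdiff_singleton_eq_erase,
    Finset.sum_erase_eq_sub (Finset.mem_univ i)]
  ring

lemma sum_sq_mergeInto [Fintype ι] {i j : ι} (x : ι → ℝ) (hij : i ≠ j) :
    ∑ k, mergeInto x i j k ^ 2 = ∑ k, x k ^ 2 + 2 * x i * x j := by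
  rw [mergeInto, sum_sq_update, sum_sq_update, update_of_ne hij]
  ring

lemma mergeInto_convex_combination {i j : ι} (x : ι → ℝ) (hij : i ≠ j) (hx : x i + x j ≠ 0) :
    (x i / (x i + x j)) • mergeInto x i j + (x j / (x i + x j)) • mergeInto x j i = x := by
  ext k
  simp only [Pi.add_apply, Pi.smul_apply, smul_eq_mul]
  rcases eq_or_ne k i with rfl | hki
  · rw [mergeInto_apply_self, mergeInto_apply_right x hij.symm, mul_zero, add_zero,
      div_mul_cancel₀ _ hx]
  rcases eq_or_ne k j with rfl | hkj
  · rw [mergeInto_apply_self, mergeInto_apply_right x hij, mul_zero, zero_add,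
      add_comm (x k) (x i), div_mul_cancel₀ _ hx]
  · simp only [mergeInto, update_of_ne hki, update_of_ne hkj, ← add_mul, ← add_div, div_self hx,
      one_mul]

theorem ConvexOn.le_half_sum_sq_add_mul [Fintype ι] {s : Set (ι → ℝ)} {u : (ι → ℝ) → ℝ}
    (hu : ConvexOn ℝ s u) {x : ι → ℝ} {i j : ι} (hij : i ≠ j) (hi : 0 < x i) (hj : 0 < x j)
    (hPs : mergeInto x i j ∈ s) (hQs : mergeInto x j i ∈ s)
    (huP : u (mergeInto x i j) = (1/2) * ∑ k, mergeInto x i j k ^ 2)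
    (huQ : u (mergeInto x j i) = (1/2) * ∑ k, mergeInto x j i k ^ 2) :
    u x ≤ (1/2) * ∑ k, x k ^ 2 + x i * x j := by
  have hsum : 0 < x i + x j := by positivity
  have hweights : x i / (x i + x j) + x j / (x i + x j) = 1 := by
    rw [← add_div, div_self hsum.ne']
  have hconv := hu.2 hPs hQs (by positivity) (by positivity) hweights
  rw [mergeInto_convex_combination x hij hsum.ne', huP, huQ, sum_sq_mergeInto x hij,
    sum_sq_mergeInto x hij.symm, mul_right_comm _ (x j)] at hconv
  calc u x
      ≤ (x i / (x i + x j) + x j / (x i + x j)) * ((1/2) * (∑ k, x k ^ 2 + 2 * x i * x j)) := by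
        simpa only [smul_eq_mul, add_mul] using hconv
    _ = (1/2) * ∑ k, x k ^ 2 + x i * x j := by rw [hweights]; ring

end

/-- If `u` is convex on the closed cone `V̄ = {x₁ ≥ 0, x₂ ≥ 0} ⊂ ℝⁿ` with
`u(x) = (1/2)|x|²` on `∂V = {x₁x₂ = 0, x₁, x₂ ≥ 0}`, then
`u(x) ≤ (1/2)|x|² + x₁x₂` for all `x ∈ V`. -/
theorem stmt15 (n : ℕ) (hn : 2 ≤ n) (u : (Fin n → ℝ) → ℝ)
    (hconv : ConvexOn ℝ
      {x : Fin n → ℝ | 0 ≤ x ⟨0, by omega⟩ ∧ 0 ≤ x ⟨1, by omega⟩} u)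
    (hbd : ∀ x : Fin n → ℝ, 0 ≤ x ⟨0, by omega⟩ → 0 ≤ x ⟨1, by omega⟩ →
      x ⟨0, by omega⟩ * x ⟨1, by omega⟩ = 0 → u x = (1/2) * ∑ i, (x i) ^ 2) :
    ∀ x : Fin n → ℝ, 0 < x ⟨0, by omega⟩ → 0 < x ⟨1, by omega⟩ →
      u x ≤ (1/2) * ∑ i, (x i) ^ 2 + x ⟨0, by omega⟩ * x ⟨1, by omega⟩ := by
  intro x h0 h1
  have hij : (⟨0, by omega⟩ : Fin n) ≠ ⟨1, by omega⟩ := by simp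
  refine hconv.le_half_sum_sq_add_mul hij h0 h1 ?_ ?_ (hbd _ ?_ ?_ ?_) (hbd _ ?_ ?_ ?_) <;>
    simp only [Set.mem_ofPred_eq, mergeInto_apply_self, mergeInto_apply_right x hij,
      mergeInto_apply_right x hij.symm, le_refl, and_true, true_and, mul_zero, zero_mul] <;>
    linarith
end

section
/- Let ν₁, ν₂ ∈ S^{n-1} and e ∈ S^{n-1} with ν_i·e > 0 for i=1,2, and define ν_i' as the unit vector obtained by projecting ν_i onto the hyperplane e^⊥ and normalizing (assuming ν_i ≠ e). If ν₁·ν₂ ≤ 0, then ν₁'·ν₂' < 0. -/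
open scoped RealInnerProductSpace

section

variable {E : Type*} [NormedAddCommGroup E] [InnerProductSpace ℝ E]

lemma real_inner_sub_smul_sub_smul_of_norm_eq_one {e : E} (he : ‖e‖ = 1) (x y : E) :
    ⟪x - ⟪x, e⟫ • e, y - ⟪y, e⟫ • e⟫ = ⟪x, y⟫ - ⟪x, e⟫ * ⟪y, e⟫ := by
  have hee : ⟪e, e⟫ = 1 := by rw [real_inner_self_eq_norm_sq, he, one_pow]
  simp only [inner_sub_left, inner_sub_right, real_inner_smul_left, real_inner_smul_right, hee,
    real_inner_comm e y]
  ring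

lemma real_inner_inv_norm_smul_neg {x y : E} (h : ⟪x, y⟫ < 0) :
    ⟪‖x‖⁻¹ • x, ‖y‖⁻¹ • y⟫ < 0 := by
  have hx : x ≠ 0 := by rintro rfl; simp at h
  have hy : y ≠ 0 := by rintro rfl; simp at h
  rw [real_inner_smul_left, real_inner_smul_right]
  exact mul_neg_of_pos_of_neg (inv_pos.2 (norm_pos_iff.2 hx))
    (mul_neg_of_pos_of_neg (inv_pos.2 (norm_pos_iff.2 hy)) h)

end

theorem stmt18_general (n : ℕ) (ν₁ ν₂ e : EuclideanSpace ℝ (Fin n))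
    (he : ‖e‖ = 1)
    (hd1 : 0 < ⟪ν₁, e⟫) (hd2 : 0 < ⟪ν₂, e⟫)
    (hobt : ⟪ν₁, ν₂⟫ ≤ 0) :
    ⟪‖ν₁ - ⟪ν₁, e⟫ • e‖⁻¹ • (ν₁ - ⟪ν₁, e⟫ • e),
      ‖ν₂ - ⟪ν₂, e⟫ • e‖⁻¹ • (ν₂ - ⟪ν₂, e⟫ • e)⟫ < 0 := by
  apply real_inner_inv_norm_smul_neg
  rw [real_inner_sub_smul_sub_smul_of_norm_eq_one he]
  linarith [mul_pos hd1 hd2]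

/-- If `ν₁, ν₂, e` are unit vectors with `νᵢ·e > 0`, `νᵢ ≠ e`, and `ν₁·ν₂ ≤ 0`, then the
normalized projections `νᵢ' = (νᵢ - (νᵢ·e)e)/|νᵢ - (νᵢ·e)e|` onto `e^⊥` satisfy
`ν₁'·ν₂' < 0`. -/
theorem stmt18 (n : ℕ) (ν₁ ν₂ e : EuclideanSpace ℝ (Fin n))
    (h1 : ‖ν₁‖ = 1) (h2 : ‖ν₂‖ = 1) (he : ‖e‖ = 1)
    (hd1 : 0 < ⟪ν₁, e⟫) (hd2 : 0 < ⟪ν₂, e⟫)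
    (hne1 : ν₁ ≠ e) (hne2 : ν₂ ≠ e)
    (hobt : ⟪ν₁, ν₂⟫ ≤ 0) :
    ⟪‖ν₁ - ⟪ν₁, e⟫ • e‖⁻¹ • (ν₁ - ⟪ν₁, e⟫ • e),
      ‖ν₂ - ⟪ν₂, e⟫ • e‖⁻¹ • (ν₂ - ⟪ν₂, e⟫ • e)⟫ < 0 :=
  stmt18_general n ν₁ ν₂ e he hd1 hd2 hobt
end
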